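/- Let J be an almost complex structure and ∇ a connection on ℝ^n that is almost complex (∇J = 0) and minimal (T = (1/4)N_J). Then the three lifts coincide: J^{G,∇} = J̃ = J^{H,∇} as matrix fields on T*ℝ^n. -/
import Mathlib


open Matrix BigOperators

noncomputable section

/-- Partial derivative `∂x_i f` at `x`. -/
def pd {n : ℕ} (f : (Fin n → ℝ) → ℝ) (i : Fin n) (x : Fin n → ℝ) : ℝ :=
  fderiv ℝ f x (Pi.single i 1)

/-- Torsion components `T^k_{ij} = Γ^k_{ij} − Γ^k_{ji}`. -/
def torsion {n : ℕ} (Γ : (Fin n → ℝ) → Fin n → Fin n → Fin n → ℝ)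
    (x : Fin n → ℝ) (k i j : Fin n) : ℝ :=
  Γ x k i j - Γ x k j i

/-- Components of `∇J`: `(∇J)^k_{ij} = ∂x_i J^k_j − J^k_l Γ^l_{ij} + J^l_j Γ^k_{il}`. -/
def nablaJ {n : ℕ} (J : (Fin n → ℝ) → Matrix (Fin n) (Fin n) ℝ)
    (Γ : (Fin n → ℝ) → Fin n → Fin n → Fin n → ℝ)
    (x : Fin n → ℝ) (k i j : Fin n) : ℝ :=
  pd (fun y => J y k j) i x - (∑ l, J x k l * Γ x l i j) + ∑ l, J x l j * Γ x k i l

/-- Components of the Nijenhuis tensor. -/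
def nijenhuis {n : ℕ} (J : (Fin n → ℝ) → Matrix (Fin n) (Fin n) ℝ)
    (x : Fin n → ℝ) (k i j : Fin n) : ℝ :=
  (∑ l, J x l i * pd (fun y => J y k j) l x) - (∑ l, J x l j * pd (fun y => J y k i) l x)
    - (∑ l, J x k l * pd (fun y => J y l j) i x) + ∑ l, J x k l * pd (fun y => J y l i) j x

/-- Symmetrized Christoffel symbols `Γ̃^k_{ij} = (Γ^k_{ij} + Γ^k_{ji})/2`. -/
def symCh {n : ℕ} (Γ : (Fin n → ℝ) → Fin n → Fin n → Fin n → ℝ)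
    (x : Fin n → ℝ) (k i j : Fin n) : ℝ :=
  (Γ x k i j + Γ x k j i) / 2

/-- Lower-left block `A(x,p)` of the generalized horizontal lift. -/
def Ablock {n : ℕ} (J : (Fin n → ℝ) → Matrix (Fin n) (Fin n) ℝ)
    (Γ : (Fin n → ℝ) → Fin n → Fin n → Fin n → ℝ) (x p : Fin n → ℝ) :
    Matrix (Fin n) (Fin n) ℝ :=
  Matrix.of fun i j =>
    ∑ k, p k * ((∑ l, Γ x k l i * J x l j) - ∑ l, Γ x k j l * J x l i)

/-- The generalized horizontal lift `J^{G,∇}(x,p) = [[J(x), 0], [A(x,p), ᵗJ(x)]]`. -/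
def JG {n : ℕ} (J : (Fin n → ℝ) → Matrix (Fin n) (Fin n) ℝ)
    (Γ : (Fin n → ℝ) → Fin n → Fin n → Fin n → ℝ) (x p : Fin n → ℝ) :
    Matrix (Fin n ⊕ Fin n) (Fin n ⊕ Fin n) ℝ :=
  Matrix.fromBlocks (J x) 0 (Ablock J Γ x p) (J x)ᵀ

/-- Lower-left block of the Satô (complete) lift. -/
def Bblock {n : ℕ} (J : (Fin n → ℝ) → Matrix (Fin n) (Fin n) ℝ) (x p : Fin n → ℝ) :
    Matrix (Fin n) (Fin n) ℝ :=
  Matrix.of fun i j =>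
    (1 / 2) * ∑ k, p k *
      (pd (fun y => J y k i) j x - pd (fun y => J y k j) i x
        + (∑ s, ∑ q, J x k s * J x q i * pd (fun y => J y s j) q x)
        - ∑ s, ∑ q, J x k s * J x q j * pd (fun y => J y s i) q x)

/-- The Satô (complete) lift `J̃(x,p) = [[J(x), 0], [B(x,p), ᵗJ(x)]]`. -/
def Sato {n : ℕ} (J : (Fin n → ℝ) → Matrix (Fin n) (Fin n) ℝ) (x p : Fin n → ℝ) :
    Matrix (Fin n ⊕ Fin n) (Fin n ⊕ Fin n) ℝ :=
  Matrix.fromBlocks (J x) 0 (Bblock J x p) (J x)ᵀ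

/-- Lower-left block of the horizontal lift. -/
def Cblock {n : ℕ} (J : (Fin n → ℝ) → Matrix (Fin n) (Fin n) ℝ)
    (Γ : (Fin n → ℝ) → Fin n → Fin n → Fin n → ℝ) (x p : Fin n → ℝ) :
    Matrix (Fin n) (Fin n) ℝ :=
  Matrix.of fun i j =>
    ∑ k, p k * ((∑ l, symCh Γ x k i l * J x l j) - ∑ l, symCh Γ x k j l * J x l i)

/-- The horizontal lift `J^{H,∇}(x,p) = [[J(x), 0], [C(x,p), ᵗJ(x)]]`. -/
def JH {n : ℕ} (J : (Fin n → ℝ) → Matrix (Fin n) (Fin n) ℝ)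
    (Γ : (Fin n → ℝ) → Fin n → Fin n → Fin n → ℝ) (x p : Fin n → ℝ) :
    Matrix (Fin n ⊕ Fin n) (Fin n ⊕ Fin n) ℝ :=
  Matrix.fromBlocks (J x) 0 (Cblock J Γ x p) (J x)ᵀ

namespace St7
variable {n : ℕ}

def opP (M : Matrix (Fin n) (Fin n) ℝ) (u : Fin n → Fin n → Fin n → ℝ) (k i j : Fin n) : ℝ :=
  ∑ l, ∑ m, M l i * M m j * u k l m
def opQ (M : Matrix (Fin n) (Fin n) ℝ) (u : Fin n → Fin n → Fin n → ℝ) (k i j : Fin n) : ℝ :=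
  ∑ m, ∑ l, M k m * M l i * u m l j
def opR (M : Matrix (Fin n) (Fin n) ℝ) (u : Fin n → Fin n → Fin n → ℝ) (k i j : Fin n) : ℝ :=
  ∑ m, ∑ l, M k m * M l j * u m i l

lemma sum2_congr {f g : Fin n → Fin n → ℝ} (h : ∀ a b, f a b = g a b) :
    (∑ a, ∑ b, f a b) = ∑ a, ∑ b, g a b :=
  Finset.sum_congr rfl fun a _ => Finset.sum_congr rfl fun b _ => h a b
lemma dsum (g : Fin n → ℝ) (k : Fin n) :
    ∑ m, (if m = k then (-1:ℝ) else 0) * g m = -g k := by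
  simp [ite_mul, Finset.sum_ite_eq']

lemma dsum' (g : Fin n → ℝ) (k : Fin n) :
    ∑ m, (if k = m then (-1:ℝ) else 0) * g m = -g k := by
  simp [ite_mul, Finset.sum_ite_eq]

lemma contrL (M : Matrix (Fin n) (Fin n) ℝ)
    (hM : ∀ k m, ∑ l, M k l * M l m = if k = m then (-1:ℝ) else 0)
    (c : Fin n) (h : Fin n → ℝ) :
    ∑ l, ∑ a, (M l c * M a l) * h a = -h c := by
  rw [Finset.sum_comm]
  have e : ∀ a ∈ (Finset.univ : Finset (Fin n)), ∑ l, (M l c * M a l) * h a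
      = ((if a = c then (-1:ℝ) else 0)) * h a := by
    intro a _
    rw [← hM a c, Finset.sum_mul]
    exact Finset.sum_congr rfl fun l _ => by ring
  rw [Finset.sum_congr rfl e, dsum]

lemma contrU (M : Matrix (Fin n) (Fin n) ℝ)
    (hM : ∀ k m, ∑ l, M k l * M l m = if k = m then (-1:ℝ) else 0)
    (c : Fin n) (h : Fin n → ℝ) :
    ∑ m, ∑ s, (M c m * M m s) * h s = -h c := by
  rw [Finset.sum_comm]
  have e : ∀ s ∈ (Finset.univ : Finset (Fin n)), ∑ m, (M c m * M m s) * h s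
      = ((if c = s then (-1:ℝ) else 0)) * h s := by
    intro s _
    rw [← hM c s, Finset.sum_mul]
  rw [Finset.sum_congr rfl e, dsum']

variable (M : Matrix (Fin n) (Fin n) ℝ) (u : Fin n → Fin n → Fin n → ℝ)

lemma comp_QP (hM : ∀ k m, ∑ l, M k l * M l m = if k = m then (-1:ℝ) else 0) (k i j : Fin n) :
    opQ M (opP M u) k i j = -opR M u k i j := by
  simp only [opQ, opP, opR, Finset.mul_sum, ← Finset.sum_neg_distrib]
  refine Finset.sum_congr rfl fun m _ => ?_
  calc ∑ l, ∑ a, ∑ b, M k m * M l i * (M a l * M b j * u m a b)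
      = ∑ l, ∑ a, (M l i * M a l) * (∑ b, M k m * (M b j * u m a b)) := by
        refine sum2_congr fun l a => ?_
        rw [Finset.mul_sum]
        exact Finset.sum_congr rfl fun b _ => by ring
    _ = -(∑ b, M k m * (M b j * u m i b)) := contrL M hM i _
    _ = ∑ l, -(M k m * M l j * u m i l) := by
        rw [← Finset.sum_neg_distrib]
        exact Finset.sum_congr rfl fun b _ => by ring

lemma comp_QQ (hM : ∀ k m, ∑ l, M k l * M l m = if k = m then (-1:ℝ) else 0) (k i j : Fin n) :
    opQ M (opQ M u) k i j = u k i j := by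
  simp only [opQ, Finset.mul_sum]
  calc ∑ m, ∑ l, ∑ s, ∑ a, M k m * M l i * (M m s * M a l * u s a j)
      = ∑ m, ∑ s, (M k m * M m s) * (∑ l, ∑ a, (M l i * M a l) * u s a j) := by
        refine Finset.sum_congr rfl fun m _ => ?_
        rw [Finset.sum_comm]
        refine Finset.sum_congr rfl fun s _ => ?_
        rw [Finset.mul_sum]
        refine Finset.sum_congr rfl fun l _ => ?_
        rw [Finset.mul_sum]
        exact Finset.sum_congr rfl fun a _ => by ring
    _ = -(∑ l, ∑ a, (M l i * M a l) * u k a j) := contrU M hM k _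
    _ = u k i j := by rw [contrL M hM i (fun a => u k a j), neg_neg]

lemma comp_QR (hM : ∀ k m, ∑ l, M k l * M l m = if k = m then (-1:ℝ) else 0) (k i j : Fin n) :
    opQ M (opR M u) k i j = -opP M u k i j := by
  simp only [opQ, opR, opP, Finset.mul_sum]
  calc ∑ m, ∑ l, ∑ s, ∑ b, M k m * M l i * (M m s * M b j * u s l b)
      = ∑ m, ∑ s, (M k m * M m s) * (∑ l, ∑ b, M l i * (M b j * u s l b)) := by
        refine Finset.sum_congr rfl fun m _ => ?_
        rw [Finset.sum_comm]
        refine Finset.sum_congr rfl fun s _ => ?_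
        rw [Finset.mul_sum]
        refine Finset.sum_congr rfl fun l _ => ?_
        rw [Finset.mul_sum]
        exact Finset.sum_congr rfl fun b _ => by ring
    _ = -(∑ l, ∑ b, M l i * (M b j * u k l b)) := contrU M hM k _
    _ = -∑ l, ∑ b, M l i * M b j * u k l b := by
        rw [neg_inj]; exact sum2_congr fun l b => by ring

lemma comp_RP (hM : ∀ k m, ∑ l, M k l * M l m = if k = m then (-1:ℝ) else 0) (k i j : Fin n) :
    opR M (opP M u) k i j = -opQ M u k i j := by
  simp only [opR, opP, opQ, Finset.mul_sum, ← Finset.sum_neg_distrib]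
  refine Finset.sum_congr rfl fun m _ => ?_
  calc ∑ l, ∑ a, ∑ b, M k m * M l j * (M a i * M b l * u m a b)
      = ∑ l, ∑ b, (M l j * M b l) * (∑ a, M k m * (M a i * u m a b)) := by
        refine Finset.sum_congr rfl fun l _ => ?_
        rw [Finset.sum_comm]
        refine Finset.sum_congr rfl fun b _ => ?_
        rw [Finset.mul_sum]
        exact Finset.sum_congr rfl fun a _ => by ring
    _ = -(∑ a, M k m * (M a i * u m a j)) := contrL M hM j _
    _ = ∑ l, -(M k m * M l i * u m l j) := by
        rw [← Finset.sum_neg_distrib]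
        exact Finset.sum_congr rfl fun a _ => by ring

lemma comp_RQ (hM : ∀ k m, ∑ l, M k l * M l m = if k = m then (-1:ℝ) else 0) (k i j : Fin n) :
    opR M (opQ M u) k i j = -opP M u k i j := by
  simp only [opR, opQ, opP, Finset.mul_sum]
  calc ∑ m, ∑ l, ∑ s, ∑ a, M k m * M l j * (M m s * M a i * u s a l)
      = ∑ m, ∑ s, (M k m * M m s) * (∑ l, ∑ a, M l j * (M a i * u s a l)) := by
        refine Finset.sum_congr rfl fun m _ => ?_
        rw [Finset.sum_comm]
        refine Finset.sum_congr rfl fun s _ => ?_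
        rw [Finset.mul_sum]
        refine Finset.sum_congr rfl fun l _ => ?_
        rw [Finset.mul_sum]
        exact Finset.sum_congr rfl fun a _ => by ring
    _ = -(∑ l, ∑ a, M l j * (M a i * u k a l)) := contrU M hM k _
    _ = -∑ l, ∑ m, M l i * M m j * u k l m := by
        rw [neg_inj, Finset.sum_comm]
        exact sum2_congr fun a l => by ring

lemma comp_RR (hM : ∀ k m, ∑ l, M k l * M l m = if k = m then (-1:ℝ) else 0) (k i j : Fin n) :
    opR M (opR M u) k i j = u k i j := by
  simp only [opR, Finset.mul_sum]
  calc ∑ m, ∑ l, ∑ s, ∑ a, M k m * M l j * (M m s * M a l * u s i a)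
      = ∑ m, ∑ s, (M k m * M m s) * (∑ l, ∑ a, (M l j * M a l) * u s i a) := by
        refine Finset.sum_congr rfl fun m _ => ?_
        rw [Finset.sum_comm]
        refine Finset.sum_congr rfl fun s _ => ?_
        rw [Finset.mul_sum]
        refine Finset.sum_congr rfl fun l _ => ?_
        rw [Finset.mul_sum]
        exact Finset.sum_congr rfl fun a _ => by ring
    _ = -(∑ l, ∑ a, (M l j * M a l) * u k i a) := contrU M hM k _
    _ = u k i j := by rw [contrL M hM j (fun a => u k i a), neg_neg]


lemma opQ_lin (M : Matrix (Fin n) (Fin n) ℝ) (T v1 v2 v3 : Fin n → Fin n → Fin n → ℝ)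
    (h : ∀ a b c, 3 * T a b c = -(v1 a b c) + v2 a b c + v3 a b c) (k i j : Fin n) :
    3 * opQ M T k i j = -(opQ M v1 k i j) + opQ M v2 k i j + opQ M v3 k i j := by
  simp only [opQ, Finset.mul_sum, ← Finset.sum_neg_distrib, ← Finset.sum_add_distrib]
  refine sum2_congr fun m l => ?_
  linear_combination (M k m * M l i) * h m l j

lemma opR_lin (M : Matrix (Fin n) (Fin n) ℝ) (T v1 v2 v3 : Fin n → Fin n → Fin n → ℝ)
    (h : ∀ a b c, 3 * T a b c = -(v1 a b c) + v2 a b c + v3 a b c) (k i j : Fin n) :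
    3 * opR M T k i j = -(opR M v1 k i j) + opR M v2 k i j + opR M v3 k i j := by
  simp only [opR, Finset.mul_sum, ← Finset.sum_neg_distrib, ← Finset.sum_add_distrib]
  refine sum2_congr fun m l => ?_
  linear_combination (M k m * M l j) * h m i l

lemma op_three (M : Matrix (Fin n) (Fin n) ℝ) (T : Fin n → Fin n → Fin n → ℝ)
    (hM : ∀ k m, ∑ l, M k l * M l m = if k = m then (-1:ℝ) else 0)
    (hrel : ∀ k i j, 3 * T k i j = -(opP M T k i j) + opQ M T k i j + opR M T k i j) :
    (∀ k i j, opP M T k i j = -(T k i j)) ∧ (∀ k i j, opQ M T k i j = T k i j) ∧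
      (∀ k i j, opR M T k i j = T k i j) := by
  have hQ : ∀ k i j, 3 * opQ M T k i j = opR M T k i j + T k i j - opP M T k i j := by
    intro k i j
    have h := opQ_lin M T (opP M T) (opQ M T) (opR M T) hrel k i j
    rw [comp_QP M T hM, comp_QQ M T hM, comp_QR M T hM] at h
    linarith
  have hR : ∀ k i j, 3 * opR M T k i j = opQ M T k i j - opP M T k i j + T k i j := by
    intro k i j
    have h := opR_lin M T (opP M T) (opQ M T) (opR M T) hrel k i j
    rw [comp_RP M T hM, comp_RQ M T hM, comp_RR M T hM] at h
    linarith
  refine ⟨fun k i j => ?_, fun k i j => ?_, fun k i j => ?_⟩ <;>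
    linarith [hrel k i j, hQ k i j, hR k i j]

end St7

/-- for an almost complex (`∇J = 0`) and minimal (`T = (1/4)N_J`)
connection, the three lifts coincide: `J^{G,∇} = J̃ = J^{H,∇}`. -/
theorem statement7 (n : ℕ)
    (J : (Fin n → ℝ) → Matrix (Fin n) (Fin n) ℝ)
    (Γ : (Fin n → ℝ) → Fin n → Fin n → Fin n → ℝ)
    (hJsmooth : ∀ k j : Fin n, ContDiff ℝ (⊤ : ℕ∞) fun x => J x k j)
    (hΓsmooth : ∀ k i j : Fin n, ContDiff ℝ (⊤ : ℕ∞) fun x => Γ x k i j)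
    (hJ : ∀ x, J x * J x = -1)
    (hac : ∀ x k i j, nablaJ J Γ x k i j = 0)
    (hmin : ∀ x k i j, torsion Γ x k i j = (1 / 4) * nijenhuis J x k i j) :
    (∀ x p : Fin n → ℝ, JG J Γ x p = Sato J x p) ∧
      (∀ x p : Fin n → ℝ, Sato J x p = JH J Γ x p) := by
    -- pointwise core facts
  have core : ∀ x p : Fin n → ℝ,
      Ablock J Γ x p = Cblock J Γ x p ∧ Bblock J x p = Cblock J Γ x p := by
    intro x p
    have hMM : ∀ k m, ∑ l, J x k l * J x l m = if k = m then (-1:ℝ) else 0 := by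
      intro k m
      have h : (J x * J x) k m = (-1 : Matrix (Fin n) (Fin n) ℝ) k m := by rw [hJ x]
      rw [Matrix.mul_apply] at h
      rw [h]
      simp [Matrix.neg_apply, Matrix.one_apply, apply_ite (fun t : ℝ => -t)]
    have hD : ∀ k j i, pd (fun y => J y k j) i x
        = (∑ l, J x k l * Γ x l i j) - ∑ l, J x l j * Γ x k i l := by
      intro k j i
      have h := hac x k i j
      unfold nablaJ at h
      linarith
    -- Nijenhuis tensor in terms of the torsion
    have hNexp : ∀ k i j, nijenhuis J x k i j
        = torsion Γ x k i j - St7.opP (J x) (torsion Γ x) k i j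
          + St7.opQ (J x) (torsion Γ x) k i j + St7.opR (J x) (torsion Γ x) k i j := by
      intro k i j
      have e1 : ∑ l, J x l i * ∑ m, J x k m * Γ x m l j
          = ∑ m, ∑ l, J x k m * J x l i * Γ x m l j := by
        rw [Finset.sum_comm]
        refine Finset.sum_congr rfl fun l _ => ?_
        rw [Finset.mul_sum]
        exact Finset.sum_congr rfl fun m _ => by ring
      have e2 : ∑ l, J x l i * ∑ m, J x m j * Γ x k l m
          = ∑ l, ∑ m, J x l i * J x m j * Γ x k l m := by
        refine Finset.sum_congr rfl fun l _ => ?_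
        rw [Finset.mul_sum]
        exact Finset.sum_congr rfl fun m _ => by ring
      have e3 : ∑ l, J x l j * ∑ m, J x k m * Γ x m l i
          = ∑ m, ∑ l, J x k m * J x l j * Γ x m l i := by
        rw [Finset.sum_comm]
        refine Finset.sum_congr rfl fun l _ => ?_
        rw [Finset.mul_sum]
        exact Finset.sum_congr rfl fun m _ => by ring
      have e4 : ∑ l, J x l j * ∑ m, J x m i * Γ x k l m
          = ∑ l, ∑ m, J x l i * J x m j * Γ x k m l := by
        rw [Finset.sum_comm]
        refine Finset.sum_congr rfl fun l _ => ?_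
        rw [Finset.mul_sum]
        exact Finset.sum_congr rfl fun m _ => by ring
      have e5 : ∑ l, J x k l * ∑ m, J x l m * Γ x m i j = -(Γ x k i j) := by
        have h := St7.contrU (J x) hMM k (fun s => Γ x s i j)
        rw [← h]
        refine Finset.sum_congr rfl fun l _ => ?_
        rw [Finset.mul_sum]
        exact Finset.sum_congr rfl fun m _ => by ring
      have e6 : ∑ l, J x k l * ∑ m, J x m j * Γ x l i m
          = ∑ m, ∑ l, J x k m * J x l j * Γ x m i l := by
        refine Finset.sum_congr rfl fun l _ => ?_
        rw [Finset.mul_sum]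
        exact Finset.sum_congr rfl fun m _ => by ring
      have e7 : ∑ l, J x k l * ∑ m, J x l m * Γ x m j i = -(Γ x k j i) := by
        have h := St7.contrU (J x) hMM k (fun s => Γ x s j i)
        rw [← h]
        refine Finset.sum_congr rfl fun l _ => ?_
        rw [Finset.mul_sum]
        exact Finset.sum_congr rfl fun m _ => by ring
      have e8 : ∑ l, J x k l * ∑ m, J x m i * Γ x l j m
          = ∑ m, ∑ l, J x k m * J x l i * Γ x m j l := by
        refine Finset.sum_congr rfl fun l _ => ?_
        rw [Finset.mul_sum]
        exact Finset.sum_congr rfl fun m _ => by ring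
      simp only [nijenhuis, hD, St7.opP, St7.opQ, St7.opR, torsion,
        mul_sub, Finset.sum_sub_distrib]
      linarith [e1, e2, e3, e4, e5, e6, e7, e8]
    have hrel : ∀ k i j, 3 * torsion Γ x k i j
        = -(St7.opP (J x) (torsion Γ x) k i j) + St7.opQ (J x) (torsion Γ x) k i j
          + St7.opR (J x) (torsion Γ x) k i j := by
      intro k i j
      have h1 := hmin x k i j
      have h2 := hNexp k i j
      linarith
    obtain ⟨hp, hq, hr⟩ := St7.op_three (J x) (torsion Γ x) hMM hrel
    -- contracted consequences of hq, hr
    have hq' : ∀ a i j, ∑ k, J x a k * torsion Γ x k i j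
        = -(∑ l, J x l i * torsion Γ x a l j) := by
      intro a i j
      have h := St7.contrU (J x) hMM a (fun m => ∑ l, J x l i * torsion Γ x m l j)
      rw [← h]
      refine Finset.sum_congr rfl fun k _ => ?_
      rw [← hq k i j]
      simp only [St7.opQ, Finset.mul_sum]
      refine Finset.sum_congr rfl fun m _ => ?_
      exact Finset.sum_congr rfl fun l _ => by ring
    have hr' : ∀ a i j, ∑ k, J x a k * torsion Γ x k i j
        = -(∑ l, J x l j * torsion Γ x a i l) := by
      intro a i j
      have h := St7.contrU (J x) hMM a (fun m => ∑ l, J x l j * torsion Γ x m i l)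
      rw [← h]
      refine Finset.sum_congr rfl fun k _ => ?_
      rw [← hr k i j]
      simp only [St7.opR, Finset.mul_sum]
      refine Finset.sum_congr rfl fun m _ => ?_
      exact Finset.sum_congr rfl fun l _ => by ring
    -- symCh expansion helpers
    have hsym : ∀ k i j, ∑ l, symCh Γ x k i l * J x l j
        = (∑ l, Γ x k i l * J x l j + ∑ l, Γ x k l i * J x l j) / 2 := by
      intro k i j
      rw [eq_div_iff (by norm_num : (2:ℝ) ≠ 0), Finset.sum_mul, ← Finset.sum_add_distrib]
      exact Finset.sum_congr rfl fun l _ => by simp only [symCh]; ring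
    -- commutation bridges
    have dcomm : ∀ (f g : Fin n → ℝ), ∑ l, f l * g l = ∑ l, g l * f l :=
      fun f g => Finset.sum_congr rfl fun l _ => by ring
    -- the A-bracket equals the C-bracket
    have hAbr : ∀ k i j, (∑ l, Γ x k l i * J x l j) - (∑ l, Γ x k j l * J x l i)
        = (∑ l, symCh Γ x k i l * J x l j) - ∑ l, symCh Γ x k j l * J x l i := by
      intro k i j
      have heq : ∑ l, J x l i * torsion Γ x k l j = ∑ l, J x l j * torsion Γ x k i l := by
        have h1 := hq' k i j
        have h2 := hr' k i j
        linarith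
      have c1 : ∑ l, J x l i * torsion Γ x k l j
          = (∑ l, J x l i * Γ x k l j) - ∑ l, J x l i * Γ x k j l := by
        simp only [torsion, mul_sub, Finset.sum_sub_distrib]
      have c2 : ∑ l, J x l j * torsion Γ x k i l
          = (∑ l, J x l j * Γ x k i l) - ∑ l, J x l j * Γ x k l i := by
        simp only [torsion, mul_sub, Finset.sum_sub_distrib]
      have d1 := dcomm (fun l => J x l i) (fun l => Γ x k l j)
      have d2 := dcomm (fun l => J x l i) (fun l => Γ x k j l)
      have d3 := dcomm (fun l => J x l j) (fun l => Γ x k i l)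
      have d4 := dcomm (fun l => J x l j) (fun l => Γ x k l i)
      rw [hsym k i j, hsym k j i]
      linarith [heq, c1, c2, d1, d2, d3, d4]
    -- the B-bracket equals twice the C-bracket
    have hBbr : ∀ k i j,
        pd (fun y => J y k i) j x - pd (fun y => J y k j) i x
          + (∑ s, ∑ q, J x k s * J x q i * pd (fun y => J y s j) q x)
          - (∑ s, ∑ q, J x k s * J x q j * pd (fun y => J y s i) q x)
        = 2 * ((∑ l, symCh Γ x k i l * J x l j) - ∑ l, symCh Γ x k j l * J x l i) := by
      intro k i j
      have hA1 : ∑ s, ∑ q, J x k s * J x q i * ((∑ l, J x s l * Γ x l q j)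
            - ∑ l, J x l j * Γ x s q l)
          = -(∑ q, J x q i * Γ x k q j)
            - ∑ s, J x k s * (∑ q, J x q i * ∑ l, J x l j * Γ x s q l) := by
        have contr : ∑ s, ∑ l, (J x k s * J x s l) * (∑ q, J x q i * Γ x l q j)
            = -(∑ q, J x q i * Γ x k q j) :=
          St7.contrU (J x) hMM k (fun l => ∑ q, J x q i * Γ x l q j)
        have part1 : ∑ s, ∑ q, J x k s * J x q i * ∑ l, J x s l * Γ x l q j
            = -(∑ q, J x q i * Γ x k q j) := by
          rw [← contr]
          refine Finset.sum_congr rfl fun s _ => ?_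
          rw [show (∑ q, J x k s * J x q i * ∑ l, J x s l * Γ x l q j)
              = ∑ q, ∑ l, J x k s * J x q i * (J x s l * Γ x l q j) from
            Finset.sum_congr rfl fun q _ => by
              rw [Finset.mul_sum], Finset.sum_comm]
          refine Finset.sum_congr rfl fun l _ => ?_
          rw [Finset.mul_sum]
          exact Finset.sum_congr rfl fun q _ => by ring
        have part2 : ∑ s, ∑ q, J x k s * J x q i * ∑ l, J x l j * Γ x s q l
            = ∑ s, J x k s * (∑ q, J x q i * ∑ l, J x l j * Γ x s q l) := by
          refine Finset.sum_congr rfl fun s _ => ?_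
          rw [Finset.mul_sum]
          exact Finset.sum_congr rfl fun q _ => by ring
        simp only [mul_sub, Finset.sum_sub_distrib]
        rw [part1, part2]
      have hA3 : ∑ s, ∑ q, J x k s * J x q j * ((∑ l, J x s l * Γ x l q i)
            - ∑ l, J x l i * Γ x s q l)
          = -(∑ q, J x q j * Γ x k q i)
            - ∑ s, J x k s * (∑ q, J x q j * ∑ l, J x l i * Γ x s q l) := by
        have contr : ∑ s, ∑ l, (J x k s * J x s l) * (∑ q, J x q j * Γ x l q i)
            = -(∑ q, J x q j * Γ x k q i) :=
          St7.contrU (J x) hMM k (fun l => ∑ q, J x q j * Γ x l q i)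
        have part1 : ∑ s, ∑ q, J x k s * J x q j * ∑ l, J x s l * Γ x l q i
            = -(∑ q, J x q j * Γ x k q i) := by
          rw [← contr]
          refine Finset.sum_congr rfl fun s _ => ?_
          rw [show (∑ q, J x k s * J x q j * ∑ l, J x s l * Γ x l q i)
              = ∑ q, ∑ l, J x k s * J x q j * (J x s l * Γ x l q i) from
            Finset.sum_congr rfl fun q _ => by
              rw [Finset.mul_sum], Finset.sum_comm]
          refine Finset.sum_congr rfl fun l _ => ?_
          rw [Finset.mul_sum]
          exact Finset.sum_congr rfl fun q _ => by ring
        have part2 : ∑ s, ∑ q, J x k s * J x q j * ∑ l, J x l i * Γ x s q l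
            = ∑ s, J x k s * (∑ q, J x q j * ∑ l, J x l i * Γ x s q l) := by
          refine Finset.sum_congr rfl fun s _ => ?_
          rw [Finset.mul_sum]
          exact Finset.sum_congr rfl fun q _ => by ring
        simp only [mul_sub, Finset.sum_sub_distrib]
        rw [part1, part2]
      -- cubic torsion identity from hp
      have hin : ∀ s, (∑ q, J x q j * ∑ l, J x l i * Γ x s q l)
          - (∑ q, J x q i * ∑ l, J x l j * Γ x s q l) = Γ x s i j - Γ x s j i := by
        intro s
        have h := hp s j i
        simp only [St7.opP, torsion, mul_sub, Finset.sum_sub_distrib] at h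
        have e4 : ∑ q, J x q j * ∑ l, J x l i * Γ x s q l
            = ∑ l, ∑ m, J x l j * J x m i * Γ x s l m := by
          refine Finset.sum_congr rfl fun q _ => ?_
          rw [Finset.mul_sum]
          exact Finset.sum_congr rfl fun l _ => by ring
        have e2 : ∑ q, J x q i * ∑ l, J x l j * Γ x s q l
            = ∑ l, ∑ m, J x l j * J x m i * Γ x s m l := by
          rw [Finset.sum_comm]
          refine Finset.sum_congr rfl fun q _ => ?_
          rw [Finset.mul_sum]
          exact Finset.sum_congr rfl fun l _ => by ring
        linarith
      have hA42 : (∑ s, J x k s * (∑ q, J x q j * ∑ l, J x l i * Γ x s q l))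
          - ∑ s, J x k s * (∑ q, J x q i * ∑ l, J x l j * Γ x s q l)
          = (∑ l, J x k l * Γ x l i j) - ∑ l, J x k l * Γ x l j i := by
        rw [← Finset.sum_sub_distrib, ← Finset.sum_sub_distrib]
        refine Finset.sum_congr rfl fun s _ => ?_
        linear_combination (J x k s) * hin s
      simp only [hD]
      rw [hsym k i j, hsym k j i]
      have d1 := dcomm (fun l => J x l i) (fun l => Γ x k j l)
      have d2 := dcomm (fun l => J x l j) (fun l => Γ x k i l)
      have d3 := dcomm (fun l => J x l i) (fun l => Γ x k l j)
      have d4 := dcomm (fun l => J x l j) (fun l => Γ x k l i)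
      linarith [hA1, hA3, hA42, d1, d2, d3, d4]
    constructor
    · ext i j
      simp only [Ablock, Cblock, Matrix.of_apply]
      exact Finset.sum_congr rfl fun k _ => by rw [hAbr k i j]
    · ext i j
      simp only [Bblock, Cblock, Matrix.of_apply]
      rw [Finset.mul_sum]
      refine Finset.sum_congr rfl fun k _ => ?_
      linear_combination (p k / 2) * hBbr k i j
  refine ⟨fun x p => ?_, fun x p => ?_⟩
  · simp only [JG, Sato, (core x p).1, (core x p).2]
  · simp only [Sato, JH, (core x p).2]
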